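/- arXiv:math/0406134 — 4 statements merged into one kernel-verified Lean document; each statement's English description precedes it below -/
import Mathlib

section
/- Let N ≥ 2 be an integer, let a, b > 0 be real numbers, and let p be a real number with p > 2 + √(5N)·a/b. Then on the set {x ∈ ℝ^N : x_l ≥ 0 for all l and Σ_{l=1}^N x_l² = b²}, the function σ_p(x) = Σ_{l=1}^N (a + x_l)^p attains its minimum exactly at the point with x_l = b/√N for all l; i.e., σ_p(x) > N(a + b/√N)^p for every other point x of the constraint set. -/
/-!
Put `s₀ = b / √N`, so that `∑ l, x l ^ 2 = N s₀ ^ 2`. It suffices that, for some constant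
`C`, `(a + s₀) ^ p - C s₀ ^ 2 < (a + s) ^ p - C s ^ 2` for every `s ≥ 0` other than `s₀`:
summing this over the coordinates gives the claim. Take `C` so that
`h s = (a + s) ^ p / p - (C / p) s ^ 2` has `h' s₀ = 0`. Then `h'` is strictly convex, and
`h s₀ < h 0` holds exactly when `2 a < (p - 2) s₀`, which the bound on `p` guarantees because
`√5 > 2`. Such an `h` has its strict minimum on `[0, ∞)` at `s₀`: by the mean value theorem
`h'` is negative somewhere in `(0, s₀)`, so convexity makes it positive beyond `s₀`; and for
`s < s₀`, either `h` increases on `[0, s]`, or `h' ≤ 0` somewhere before `s` and then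
`h' < 0` on `(s, s₀)`.
-/

open Matrix
open scoped Classical

noncomputable section

namespace FramesErasures

/-- The constant `c_{n,k} = sqrt(k(n-k)/(n^2(n-1)))`. -/
noncomputable def c (n k : ℕ) : ℝ :=
  Real.sqrt ((k : ℝ) * ((n : ℝ) - k) / ((n : ℝ) ^ 2 * ((n : ℝ) - 1)))

/-- Operator norm (ℓ²→ℓ²) of a square real matrix. -/
noncomputable def opNorm {k : ℕ} (A : Matrix (Fin k) (Fin k) ℝ) : ℝ :=
  ‖Matrix.toEuclideanCLM (𝕜 := ℝ) A‖

/-- The diagonal 0-1 matrix with 1's exactly at the positions in `S`. -/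
def diagS {n : ℕ} (S : Finset (Fin n)) : Matrix (Fin n) (Fin n) ℝ :=
  Matrix.diagonal fun i => if i ∈ S then 1 else 0

/-- `e_m^∞(F)`: the maximal norm of an error operator for `m` erasures. -/
noncomputable def errInf {n k : ℕ} (V : Matrix (Fin n) (Fin k) ℝ) (m : ℕ) : ℝ :=
  sSup {x : ℝ | ∃ S : Finset (Fin n), S.card = m ∧ x = opNorm (Vᵀ * diagS S * V)}

/-- `e_m^p(F)`: the ℓᵖ-average of the norms of the error operators for `m` erasures. -/
noncomputable def errP {n k : ℕ} (V : Matrix (Fin n) (Fin k) ℝ) (m : ℕ) (p : ℝ) : ℝ :=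
  ((n.choose m : ℝ)⁻¹ *
      ∑ S ∈ Finset.univ.filter fun S : Finset (Fin n) => S.card = m,
        opNorm (Vᵀ * diagS S * V) ^ p) ^ (1 / p)

/-- A Parseval frame is uniform if all diagonal Grammian entries equal `k/n`. -/
def Uniform (n k : ℕ) (V : Matrix (Fin n) (Fin k) ℝ) : Prop :=
  ∀ j, (V * Vᵀ) j j = (k : ℝ) / n

/-- 2-uniformity, via the equiangularity characterization. -/
def TwoUniform (n k : ℕ) (V : Matrix (Fin n) (Fin k) ℝ) : Prop :=
  Uniform n k V ∧ ∀ i j, i ≠ j → |(V * Vᵀ) i j| = c n k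

/-- The `n×n` all-ones matrix. -/
def Jmat (n : ℕ) : Matrix (Fin n) (Fin n) ℝ :=
  Matrix.of fun _ _ => 1

/-- A real 2-uniform `(n,k)`-frame, given by its analysis operator and signature matrix. -/
structure TwoUniformFrame (n k : ℕ) where
  V : Matrix (Fin n) (Fin k) ℝ
  Q : Matrix (Fin n) (Fin n) ℝ
  parseval : Vᵀ * V = 1
  symm : Qᵀ = Q
  diag : ∀ i, Q i i = 0
  offdiag : ∀ i j, i ≠ j → Q i j = 1 ∨ Q i j = -1
  gram : V * Vᵀ = ((k : ℝ) / n) • (1 : Matrix (Fin n) (Fin n) ℝ) + c n k • Q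

/-- The graph associated with a 2-uniform frame: `i ≠ j` adjacent iff `Q i j = -1`. -/
def frameGraph {n k : ℕ} (F : TwoUniformFrame n k) : SimpleGraph (Fin n) where
  Adj i j := i ≠ j ∧ F.Q i j = -1
  symm := by
    constructor
    intro i j h
    refine ⟨h.1.symm, ?_⟩
    have h2 : F.Q i j = F.Q j i := by
      have := congrFun (congrFun F.symm j) i
      simpa [Matrix.transpose_apply] using this
    rw [← h2]
    exact h.2
  loopless := ⟨fun i h => h.1 rfl⟩

/-- A graph is complete bipartite (with one part possibly empty). -/
def IsCompleteBipartite {α : Type*} (G : SimpleGraph α) : Prop :=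
  ∃ A : Set α, ∀ i j, G.Adj i j ↔ ((i ∈ A) ↔ (j ∉ A))

/-- `G` has an induced complete bipartite subgraph on `m` vertices. -/
def HasInducedCompleteBipartite {n : ℕ} (G : SimpleGraph (Fin n)) (m : ℕ) : Prop :=
  ∃ S : Finset (Fin n), S.card = m ∧
    IsCompleteBipartite (G.induce (S : Set (Fin n)))

/-- The Seidel adjacency matrix of a graph. -/
noncomputable def seidel {α : Type*} [DecidableEq α] (G : SimpleGraph α) : Matrix α α ℝ :=
  Matrix.of fun i j => if i = j then 0 else if G.Adj i j then -1 else 1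

/-- Switching equivalence of graphs: Seidel matrices conjugate by a product of a permutation
and a `±1` diagonal matrix. -/
def SwitchingEquivalent {α : Type*} [DecidableEq α] (G H : SimpleGraph α) : Prop :=
  ∃ (σ : Equiv.Perm α) (ε : α → ℝ), (∀ i, ε i = 1 ∨ ε i = -1) ∧
    ∀ i j, seidel H i j = ε i * ε j * seidel G (σ i) (σ j)

/-- `G ∈ 𝒢_m^(s)`: the minimal number of edges in the switching class of `G` equals `s`. -/
def MinSwitchEdges {α : Type*} [DecidableEq α] (G : SimpleGraph α) (s : ℕ) : Prop :=
  IsLeast {t : ℕ | ∃ H : SimpleGraph α, SwitchingEquivalent G H ∧ H.edgeSet.ncard = t} s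

/-- `lam` is the largest eigenvalue of the real matrix `A`. -/
def IsMaxEigenvalue {m : ℕ} (A : Matrix (Fin m) (Fin m) ℝ) (lam : ℝ) : Prop :=
  (∃ v : Fin m → ℝ, v ≠ 0 ∧ A.mulVec v = lam • v) ∧
  ∀ μ : ℝ, (∃ v : Fin m → ℝ, v ≠ 0 ∧ A.mulVec v = μ • v) → μ ≤ lam

/-- A 2-uniform frame is 3-uniform if the error norm is the same for all triple erasures. -/
def ThreeUniform {n k : ℕ} (F : TwoUniformFrame n k) : Prop :=
  ∀ S T : Finset (Fin n), S.card = 3 → T.card = 3 →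
    opNorm (F.Vᵀ * diagS S * F.V) = opNorm (F.Vᵀ * diagS T * F.V)

end FramesErasures

open Set

section DerivConvex

variable {f f' : ℝ → ℝ} {u v : ℝ}

theorem strictMonoOn_Icc_of_hasDerivAt_pos (hf : ∀ t ∈ Icc u v, HasDerivAt f (f' t) t)
    (hpos : ∀ t ∈ Ioo u v, 0 < f' t) : StrictMonoOn f (Icc u v) :=
  strictMonoOn_of_hasDerivWithinAt_pos (convex_Icc u v) (HasDerivAt.continuousOn hf)
    (fun t ht ↦ by
      rw [interior_Icc] at ht ⊢
      exact (hf t (Ioo_subset_Icc_self ht)).hasDerivWithinAt)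
    (by rwa [interior_Icc])

theorem strictAntiOn_Icc_of_hasDerivAt_neg (hf : ∀ t ∈ Icc u v, HasDerivAt f (f' t) t)
    (hneg : ∀ t ∈ Ioo u v, f' t < 0) : StrictAntiOn f (Icc u v) :=
  strictAntiOn_of_hasDerivWithinAt_neg (convex_Icc u v) (HasDerivAt.continuousOn hf)
    (fun t ht ↦ by
      rw [interior_Icc] at ht ⊢
      exact (hf t (Ioo_subset_Icc_self ht)).hasDerivWithinAt)
    (by rwa [interior_Icc])

theorem ConvexOn.pos_of_neg_of_eq_zero {s : Set ℝ} {r s₀ t : ℝ} (hf : ConvexOn ℝ s f)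
    (hr : r ∈ s) (ht : t ∈ s) (hrs : r < s₀) (hst : s₀ < t) (hfr : f r < 0) (hfs : f s₀ = 0) :
    0 < f t := by
  have hslope := hf.slope_mono_adjacent hr ht hrs hst
  rw [hfs, zero_sub, sub_zero] at hslope
  have hleft : 0 < -f r / (s₀ - r) := div_pos (neg_pos.mpr hfr) (sub_pos.mpr hrs)
  exact (div_pos_iff_of_pos_right (sub_pos.mpr hst)).mp (hleft.trans_le hslope)

variable {x₀ s₀ : ℝ}

theorem lt_apply_of_strictConvexOn_deriv (hf : ∀ t ∈ Ici x₀, HasDerivAt f (f' t) t)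
    (hconv : StrictConvexOn ℝ (Ici x₀) f') (hs₀ : x₀ < s₀) (hcrit : f' s₀ = 0)
    (hend : f s₀ < f x₀) {t : ℝ} (ht : x₀ ≤ t) (hts : t ≠ s₀) : f s₀ < f t := by
  have hf_Icc : ∀ {u v}, x₀ ≤ u → ∀ t ∈ Icc u v, HasDerivAt f (f' t) t :=
    fun hu t ht ↦ hf t (hu.trans ht.1)
  rcases hts.lt_or_gt with hlt | hgt
  · by_cases hincr : ∀ r ∈ Ioo x₀ t, 0 < f' r
    · have hmono := (strictMonoOn_Icc_of_hasDerivAt_pos (hf_Icc le_rfl) hincr).monotoneOn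
      exact hend.trans_le (hmono ⟨le_rfl, ht⟩ ⟨ht, le_rfl⟩ ht)
    · push Not at hincr
      obtain ⟨r, hr, hfr⟩ := hincr
      have hneg : ∀ u ∈ Ioo t s₀, f' u < 0 := fun u hu ↦ by
        have hseg : u ∈ openSegment ℝ r s₀ := by
          rw [openSegment_eq_Ioo (hr.2.trans hlt)]
          exact ⟨hr.2.trans hu.1, hu.2⟩
        have := hconv.lt_on_openSegment (le_of_lt hr.1) hs₀.le (hr.2.trans hlt).ne hseg
        rw [hcrit] at this
        exact this.trans_le (max_le hfr le_rfl)
      exact strictAntiOn_Icc_of_hasDerivAt_neg (hf_Icc ht) hneg ⟨le_rfl, hlt.le⟩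
        ⟨hlt.le, le_rfl⟩ hlt
  · obtain ⟨r, hr, hfr⟩ := exists_hasDerivAt_eq_slope f f' hs₀
      (HasDerivAt.continuousOn (hf_Icc le_rfl))
      fun t ht ↦ hf_Icc le_rfl t (Ioo_subset_Icc_self ht)
    have hfr_neg : f' r < 0 := by
      rw [hfr]
      exact div_neg_of_neg_of_pos (sub_neg.mpr hend) (sub_pos.mpr hs₀)
    have hpos : ∀ u ∈ Ioo s₀ t, 0 < f' u := fun u hu ↦
      hconv.convexOn.pos_of_neg_of_eq_zero (le_of_lt hr.1) (hs₀.le.trans hu.1.le) hr.2 hu.1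
        hfr_neg hcrit
    exact strictMonoOn_Icc_of_hasDerivAt_pos (hf_Icc hs₀.le) hpos ⟨le_rfl, hgt.le⟩
      ⟨hgt.le, le_rfl⟩ hgt

end DerivConvex

theorem card_mul_lt_sum_of_sum_sq_eq {ι : Type*} [Fintype ι] {f : ℝ → ℝ} {C s₀ : ℝ}
    (hf : ∀ s, 0 ≤ s → s ≠ s₀ → f s₀ - C * s₀ ^ 2 < f s - C * s ^ 2) {x : ι → ℝ}
    (hx0 : ∀ l, 0 ≤ x l) (hx2 : ∑ l, x l ^ 2 = Fintype.card ι * s₀ ^ 2)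
    (hne : x ≠ fun _ ↦ s₀) : Fintype.card ι * f s₀ < ∑ l, f (x l) := by
  obtain ⟨l₀, hl₀⟩ := Function.ne_iff.mp hne
  have hsum : ∑ _l : ι, (f s₀ - C * s₀ ^ 2) < ∑ l, (f (x l) - C * x l ^ 2) := by
    refine Finset.sum_lt_sum (fun l _ ↦ ?_) ⟨l₀, Finset.mem_univ _, hf _ (hx0 l₀) hl₀⟩
    rcases eq_or_ne (x l) s₀ with h | h
    · rw [h]
    · exact (hf _ (hx0 l) h).le
  rw [Finset.sum_sub_distrib, Finset.sum_sub_distrib, ← Finset.mul_sum, ← Finset.mul_sum, hx2,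
    Finset.sum_const, Finset.sum_const, Finset.card_univ, nsmul_eq_mul, nsmul_eq_mul] at hsum
  linarith

theorem rpow_add_sub_mul_sq_lt {a p s₀ s : ℝ} (ha : 0 < a) (hs₀ : 0 < s₀)
    (hgap : 2 * a < (p - 2) * s₀) (hs : 0 ≤ s) (hne : s ≠ s₀) :
    (a + s₀) ^ p - p * (a + s₀) ^ (p - 1) / (2 * s₀) * s₀ ^ 2
      < (a + s) ^ p - p * (a + s₀) ^ (p - 1) / (2 * s₀) * s ^ 2 := by
  have hp : 2 < p := by nlinarith
  set D := (a + s₀) ^ (p - 1) / (2 * s₀) with hD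
  have hderiv : ∀ t ∈ Ici (0 : ℝ), HasDerivAt (fun t ↦ (a + t) ^ p / p - D * t ^ 2)
      ((a + t) ^ (p - 1) - 2 * D * t) t := fun t ht ↦ by
    have hrpow := ((hasDerivAt_id' t).const_add a).rpow_const (p := p) (Or.inr (by linarith))
    refine ((hrpow.div_const p).sub ((hasDerivAt_pow 2 t).const_mul D)).congr_deriv ?_
    field_simp
    ring
  have hconv : StrictConvexOn ℝ (Ici 0) fun t ↦ (a + t) ^ (p - 1) - 2 * D * t := by
    have hrpow := ((strictConvexOn_rpow (p := p - 1) (by linarith)).translate_right a).subset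
      (fun t (ht : 0 ≤ t) ↦ show 0 ≤ a + t by linarith) (convex_Ici 0)
    exact hrpow.sub_concaveOn ((concaveOn_id (convex_Ici 0)).smul (by positivity))
  have hcrit : (a + s₀) ^ (p - 1) - 2 * D * s₀ = 0 := by
    rw [hD]
    field_simp
    ring
  have hend : (a + s₀) ^ p / p - D * s₀ ^ 2 < (a + 0) ^ p / p - D * 0 ^ 2 := by
    have hval : (a + s₀) ^ p / p - D * s₀ ^ 2
        = (a + s₀) ^ (p - 1) * (2 * a - (p - 2) * s₀) / (2 * p) := by
      have hsplit : (a + s₀) ^ p = (a + s₀) ^ (p - 1) * (a + s₀) := by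
        rw [← Real.rpow_add_one (by positivity), sub_add_cancel]
      rw [hsplit, hD]
      field_simp
      ring
    have hneg : (a + s₀) ^ (p - 1) * (2 * a - (p - 2) * s₀) / (2 * p) < 0 :=
      div_neg_of_neg_of_pos (mul_neg_of_pos_of_neg (by positivity) (by linarith)) (by linarith)
    have ha_pow : 0 < a ^ p / p := by positivity
    rw [hval, add_zero, zero_pow two_ne_zero, mul_zero, sub_zero]
    linarith
  have hmin := lt_apply_of_strictConvexOn_deriv hderiv hconv hs₀ hcrit hend hs hne
  have hp0 : 0 < p := by linarith
  calc _ = p * ((a + s₀) ^ p / p - D * s₀ ^ 2) := by rw [hD]; field_simp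
    _ < p * ((a + s) ^ p / p - D * s ^ 2) := mul_lt_mul_of_pos_left hmin hp0
    _ = _ := by rw [hD]; field_simp

namespace FramesErasures

theorem statement1_general (N : ℕ) (a b : ℝ) (ha : 0 < a) (hb : 0 < b)
    (p : ℝ) (hp : 2 + Real.sqrt (5 * N) * a / b < p)
    (x : Fin N → ℝ) (hx0 : ∀ l, 0 ≤ x l) (hx2 : ∑ l, x l ^ 2 = b ^ 2)
    (hxne : x ≠ fun _ => b / Real.sqrt N) :
    (N : ℝ) * (a + b / Real.sqrt N) ^ p < ∑ l, (a + x l) ^ p := by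
  obtain ⟨l₀, -⟩ := Function.ne_iff.mp hxne
  have hN : (0 : ℝ) < N := Nat.cast_pos.mpr l₀.pos
  set s₀ := b / Real.sqrt N with hs₀_def
  have hs₀ : 0 < s₀ := by positivity
  have hsum_sq : ∑ l, x l ^ 2 = Fintype.card (Fin N) * s₀ ^ 2 := by
    rw [hx2, Fintype.card_fin, hs₀_def, div_pow, Real.sq_sqrt hN.le]
    field_simp
  have hgap : 2 * a < (p - 2) * s₀ := by
    have hsqrt5 : 2 < Real.sqrt 5 := (Real.lt_sqrt zero_le_two).mpr (by norm_num)
    have hscale : Real.sqrt (5 * N) * a / b * s₀ = Real.sqrt 5 * a := by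
      rw [Real.sqrt_mul (by norm_num), hs₀_def]
      field_simp
    calc 2 * a < Real.sqrt 5 * a := mul_lt_mul_of_pos_right hsqrt5 ha
      _ = Real.sqrt (5 * N) * a / b * s₀ := hscale.symm
      _ < (p - 2) * s₀ := mul_lt_mul_of_pos_right (by linarith) hs₀
  simpa using card_mul_lt_sum_of_sum_sq_eq (f := fun s ↦ (a + s) ^ p)
    (fun s hs hne ↦ rpow_add_sub_mul_sq_lt ha hs₀ hgap hs hne) hx0 hsum_sq hxne

theorem statement1 (N : ℕ) (hN : 2 ≤ N) (a b : ℝ) (ha : 0 < a) (hb : 0 < b)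
    (p : ℝ) (hp : 2 + Real.sqrt (5 * N) * a / b < p)
    (x : Fin N → ℝ) (hx0 : ∀ l, 0 ≤ x l) (hx2 : ∑ l, x l ^ 2 = b ^ 2)
    (hxne : x ≠ fun _ => b / Real.sqrt N) :
    (N : ℝ) * (a + b / Real.sqrt N) ^ p < ∑ l, (a + x l) ^ p :=
  statement1_general N a b ha hb p hp x hx0 hx2 hxne

end FramesErasures
end
end

section
/- Every uniform real (n,k)-frame F = {f_1,…,f_n} satisfies e_2^2(F)² = k²/n² + k(n−k)/(n²(n−1)) + (2k/(n²(n−1)))·Σ_{i≠j} |⟨f_i,f_j⟩|. Consequently, a uniform (n,k)-frame minimizes e_2^2 among all uniform (n,k)-frames if and only if it minimizes Σ_{i≠j} |⟨f_i,f_j⟩| among all uniform (n,k)-frames. -/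
open Matrix
open scoped Classical

noncomputable section

namespace FramesErasures

/-!
Erasing two frame vectors `f i`, `f j` leaves the error operator `x ↦ ⟪f i, x⟫ f i + ⟪f j, x⟫ f j`,
whose norm is `‖f i‖² + |⟪f i, f j⟫| = k / n + |⟪f i, f j⟫|`, attained at `f i ± f j`.
Squaring and averaging over the `n.choose 2` pairs, the cross terms produce `∑ |⟪f i, f j⟫|`,
while the squares add up to `∑_{i ≠ j} ⟪f i, f j⟫² = k - k² / n`, because the Gram matrix `V Vᵀ`
is an orthogonal projection of trace `k`. As `e_2^2 ≥ 0` and the coefficient of that sum is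
positive, minimizing `e_2^2` over uniform frames is the same as minimizing `∑ |⟪f i, f j⟫|`.
-/

open scoped RealInnerProductSpace

section RankTwo

variable {E : Type*} [NormedAddCommGroup E] [InnerProductSpace ℝ E]
  {T : E →L[ℝ] E} {u w : E} {r a : ℝ}

lemma norm_apply_le_of_apply_eq_inner_smul_add (hu : ⟪u, u⟫ = r) (hw : ⟪w, w⟫ = r)
    (ha : ⟪u, w⟫ = a) (hT : ∀ x, T x = ⟪u, x⟫ • u + ⟪w, x⟫ • w) (x : E) :
    ‖T x‖ ≤ (r + |a|) * ‖x‖ := by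
  set p := ⟪u, x⟫
  set q := ⟪w, x⟫
  have hr : 0 ≤ r := hu ▸ real_inner_self_nonneg
  have h_sq : ‖T x‖ ^ 2 = p ^ 2 * r + 2 * (p * q) * a + q ^ 2 * r := by
    rw [← real_inner_self_eq_norm_sq, hT, real_inner_add_add_self]
    simp only [real_inner_smul_left, real_inner_smul_right, hu, hw, ha]
    ring
  have h_inner : p ^ 2 + q ^ 2 = ⟪x, T x⟫ := by
    rw [hT, inner_add_right, real_inner_smul_right, real_inner_smul_right,
      real_inner_comm u x, real_inner_comm w x]
    ring
  -- `2 p q a ≤ |a| (p² + q²)`, and `p² + q² = ⟪x, T x⟫ ≤ ‖x‖ ‖T x‖`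
  have h_le : ‖T x‖ ^ 2 ≤ (r + |a|) * ‖x‖ * ‖T x‖ := by
    have := real_inner_le_norm x (T x)
    nlinarith [le_abs_self a, neg_abs_le a, sq_nonneg (p + q), sq_nonneg (p - q),
      mul_nonneg (add_nonneg hr (abs_nonneg a)) (sub_nonneg.2 (h_inner ▸ this))]
  rcases (norm_nonneg (T x)).eq_or_lt with h | h
  · rw [← h]
    exact mul_nonneg (add_nonneg hr (abs_nonneg a)) (norm_nonneg x)
  · nlinarith

lemma add_le_norm_of_apply_eq_inner_smul_add (hu : ⟪u, u⟫ = r) (hw : ⟪w, w⟫ = r)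
    (ha : ⟪u, w⟫ = a) (ha₀ : 0 ≤ a) (hT : ∀ x, T x = ⟪u, x⟫ • u + ⟪w, x⟫ • w) :
    r + a ≤ ‖T‖ := by
  have hr : 0 ≤ r := hu ▸ real_inner_self_nonneg
  have h_eig : T (u + w) = (r + a) • (u + w) := by
    rw [hT, inner_add_right, inner_add_right, hu, hw, ha, real_inner_comm, ha, smul_add]
    ring_nf
  have h_norm : ‖u + w‖ ^ 2 = 2 * (r + a) := by
    rw [← real_inner_self_eq_norm_sq, real_inner_add_add_self, hu, hw, ha]
    ring
  rcases (add_nonneg hr ha₀).eq_or_lt with h | h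
  · rw [← h]; exact norm_nonneg T
  · have h_pos : 0 < ‖u + w‖ := by nlinarith [norm_nonneg (u + w)]
    refine le_of_mul_le_mul_right ?_ h_pos
    calc (r + a) * ‖u + w‖ = ‖T (u + w)‖ := by
          rw [h_eig, norm_smul, Real.norm_of_nonneg h.le]
      _ ≤ ‖T‖ * ‖u + w‖ := T.le_opNorm _

theorem norm_eq_of_apply_eq_inner_smul_add (hu : ⟪u, u⟫ = r) (hw : ⟪w, w⟫ = r)
    (ha : ⟪u, w⟫ = a) (hT : ∀ x, T x = ⟪u, x⟫ • u + ⟪w, x⟫ • w) :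
    ‖T‖ = r + |a| := by
  have hr : 0 ≤ r := hu ▸ real_inner_self_nonneg
  refine le_antisymm (T.opNorm_le_bound (by positivity)
    (norm_apply_le_of_apply_eq_inner_smul_add hu hw ha hT)) ?_
  rcases le_or_gt 0 a with ha₀ | ha₀
  · rw [abs_of_nonneg ha₀]
    exact add_le_norm_of_apply_eq_inner_smul_add hu hw ha ha₀ hT
  · -- replacing `w` by `-w` leaves `T` unchanged and flips the sign of `a`
    rw [abs_of_neg ha₀]
    refine add_le_norm_of_apply_eq_inner_smul_add hu (by rw [inner_neg_neg, hw])
      (by rw [inner_neg_right, ha]) (by linarith) fun x => ?_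
    rw [hT, inner_neg_left, neg_smul_neg]

end RankTwo

lemma filter_offDiag_pair_eq {α : Type*} [Fintype α] [DecidableEq α] {S : Finset α}
    (hS : S.card = 2) :
    {p ∈ (Finset.univ : Finset α).offDiag | ({p.1, p.2} : Finset α) = S} = S.offDiag := by
  ext ⟨a, b⟩
  simp only [Finset.mem_filter, Finset.mem_offDiag, Finset.mem_univ, true_and]
  constructor
  · rintro ⟨hab, rfl⟩
    simp [hab]
  · rintro ⟨ha, hb, hab⟩
    refine ⟨hab, Finset.eq_of_subset_of_card_le (Finset.insert_subset ha
      (Finset.singleton_subset_iff.2 hb)) ?_⟩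
    rw [hS, Finset.card_pair hab]

lemma two_nsmul_sum_card_eq_two {α M : Type*} [Fintype α] [DecidableEq α] [AddCommMonoid M]
    (F : Finset α → M) :
    2 • ∑ S ∈ Finset.univ.filter (fun S : Finset α => S.card = 2), F S
      = ∑ i, ∑ j ∈ Finset.univ.erase i, F {i, j} := by
  have h_maps : ∀ p ∈ (Finset.univ : Finset α).offDiag,
      ({p.1, p.2} : Finset α) ∈ Finset.univ.filter (fun S : Finset α => S.card = 2) := by
    intro p hp
    simpa using Finset.card_pair (Finset.mem_offDiag.1 hp).2.2
  have h_offDiag : ∑ i, ∑ j ∈ Finset.univ.erase i, F {i, j}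
      = ∑ p ∈ (Finset.univ : Finset α).offDiag, F {p.1, p.2} := by
    have h_eq : (Finset.univ : Finset α).offDiag = ({p : α × α | p.1 ≠ p.2} : Finset (α × α)) := by
      ext; simp
    rw [h_eq, Finset.sum_filter, ← Finset.univ_product_univ, Finset.sum_product]
    simp only [← Finset.sum_filter, Finset.filter_ne]
  rw [h_offDiag, ← Finset.sum_fiberwise_of_maps_to h_maps, Finset.smul_sum]
  refine Finset.sum_congr rfl fun S hS => ?_
  have hS : S.card = 2 := (Finset.mem_filter.1 hS).2
  rw [Finset.sum_congr rfl fun p hp => congrArg F (Finset.mem_filter.1 hp).2,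
    Finset.sum_const, filter_offDiag_pair_eq hS, Finset.offDiag_card, hS]

lemma sum_sum_sq_eq_trace_mul_transpose {m : Type*} [Fintype m] (G : Matrix m m ℝ) :
    ∑ i, ∑ j, G i j ^ 2 = (G * Gᵀ).trace := by
  simp [Matrix.trace, Matrix.mul_apply, sq]

section AnalysisOperator

variable {n k : ℕ} (V : Matrix (Fin n) (Fin k) ℝ)

lemma transpose_mul_diagS_mul_mulVec (S : Finset (Fin n)) (x : Fin k → ℝ) :
    (Vᵀ * diagS S * V) *ᵥ x = ∑ i ∈ S, (V i ⬝ᵥ x) • V i := by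
  rw [← Matrix.mulVec_mulVec, ← Matrix.mulVec_mulVec, Matrix.mulVec_transpose,
    Matrix.vecMul_eq_sum, diagS]
  simp only [Matrix.mulVec_diagonal, ite_mul, one_mul, zero_mul, ite_smul, zero_smul,
    Finset.sum_ite_mem, Finset.univ_inter]
  rfl

lemma inner_toLp_row (i j : Fin n) :
    ⟪WithLp.toLp 2 (V i), WithLp.toLp 2 (V j)⟫ = (V * Vᵀ) i j := by
  simp [EuclideanSpace.inner_toLp_toLp, Matrix.mul_apply, dotProduct, mul_comm]

lemma toEuclideanCLM_transpose_mul_diagS_mul_apply (S : Finset (Fin n))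
    (x : EuclideanSpace ℝ (Fin k)) :
    Matrix.toEuclideanCLM (𝕜 := ℝ) (Vᵀ * diagS S * V) x
      = ∑ i ∈ S, ⟪WithLp.toLp 2 (V i), x⟫ • WithLp.toLp 2 (V i) := by
  apply WithLp.ofLp_injective 2
  simp [transpose_mul_diagS_mul_mulVec, EuclideanSpace.inner_eq_star_dotProduct, dotProduct_comm]

lemma opNorm_transpose_mul_diagS_pair_mul (hU : Uniform n k V) {i j : Fin n} (hij : i ≠ j) :
    opNorm (Vᵀ * diagS {i, j} * V) = (k : ℝ) / n + |(V * Vᵀ) i j| :=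
  norm_eq_of_apply_eq_inner_smul_add (by rw [inner_toLp_row, hU]) (by rw [inner_toLp_row, hU])
    (inner_toLp_row V i j) fun x => by
      rw [toEuclideanCLM_transpose_mul_diagS_mul_apply, Finset.sum_pair hij]

lemma sum_sum_mul_transpose_sq (hP : Vᵀ * V = 1) :
    ∑ i, ∑ j, (V * Vᵀ) i j ^ 2 = k := by
  rw [sum_sum_sq_eq_trace_mul_transpose, Matrix.transpose_mul, Matrix.transpose_transpose,
    Matrix.mul_assoc, ← Matrix.mul_assoc Vᵀ, hP, Matrix.one_mul, Matrix.trace_mul_comm, hP,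
    Matrix.trace_one, Fintype.card_fin]

lemma sum_sum_erase_mul_transpose_sq (hP : Vᵀ * V = 1) (hU : Uniform n k V) :
    ∑ i, ∑ j ∈ Finset.univ.erase i, (V * Vᵀ) i j ^ 2 = k - (k : ℝ) ^ 2 / n := by
  have h_diag : ∀ i, (V * Vᵀ) i i ^ 2 = ((k : ℝ) / n) ^ 2 := fun i => by rw [hU i]
  simp only [Finset.sum_erase_eq_sub (Finset.mem_univ _), Finset.sum_sub_distrib,
    sum_sum_mul_transpose_sq V hP, h_diag, Finset.sum_const, Finset.card_univ,
    Fintype.card_fin, nsmul_eq_mul]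
  rcases n.eq_zero_or_pos with rfl | hn
  · simp
  · field_simp

end AnalysisOperator

lemma errP_two_eq_sqrt {n k : ℕ} (V : Matrix (Fin n) (Fin k) ℝ) (m : ℕ) :
    errP V m 2 = √((n.choose m : ℝ)⁻¹ *
      ∑ S ∈ Finset.univ.filter fun S : Finset (Fin n) => S.card = m,
        opNorm (Vᵀ * diagS S * V) ^ 2) := by
  simp only [errP, Real.rpow_two, Real.sqrt_eq_rpow]

section UniformFrame

variable {n k : ℕ} {V : Matrix (Fin n) (Fin k) ℝ}

lemma two_mul_sum_opNorm_sq_card_eq_two (hP : Vᵀ * V = 1) (hU : Uniform n k V) :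
    2 * ∑ S ∈ Finset.univ.filter (fun S : Finset (Fin n) => S.card = 2),
        opNorm (Vᵀ * diagS S * V) ^ 2
      = n * (n - 1) * ((k : ℝ) / n) ^ 2 + 2 * ((k : ℝ) / n) *
          (∑ i : Fin n, ∑ j ∈ Finset.univ.erase i, |(V * Vᵀ) i j|) + (k - (k : ℝ) ^ 2 / n) := by
  have h_pairs := two_nsmul_sum_card_eq_two fun S : Finset (Fin n) => opNorm (Vᵀ * diagS S * V) ^ 2
  rw [nsmul_eq_mul, Nat.cast_ofNat] at h_pairs
  rw [h_pairs, ← sum_sum_erase_mul_transpose_sq V hP hU]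
  have h_card : ∀ i : Fin n, ((Finset.univ.erase i).card : ℝ) = n - 1 := fun i => by
    rw [Finset.card_erase_of_mem (Finset.mem_univ i), Finset.card_univ, Fintype.card_fin,
      Nat.cast_pred i.pos]
  calc ∑ i, ∑ j ∈ Finset.univ.erase i, opNorm (Vᵀ * diagS ({i, j} : Finset (Fin n)) * V) ^ 2
      = ∑ i, ∑ j ∈ Finset.univ.erase i,
          (((k : ℝ) / n) ^ 2 + 2 * ((k : ℝ) / n) * |(V * Vᵀ) i j| + (V * Vᵀ) i j ^ 2) := by
        refine Finset.sum_congr rfl fun i _ => Finset.sum_congr rfl fun j hj => ?_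
        rw [opNorm_transpose_mul_diagS_pair_mul V hU (Finset.ne_of_mem_erase hj).symm, add_sq,
          sq_abs]
    _ = _ := by
        simp only [Finset.sum_add_distrib, ← Finset.mul_sum, Finset.sum_const, nsmul_eq_mul,
          h_card, Finset.card_univ, Fintype.card_fin]
        ring

theorem errP_two_two_sq (hn : 2 ≤ n) (hP : Vᵀ * V = 1) (hU : Uniform n k V) :
    errP V 2 2 ^ 2 =
      (k : ℝ) ^ 2 / (n : ℝ) ^ 2 +
        (k : ℝ) * ((n : ℝ) - k) / ((n : ℝ) ^ 2 * ((n : ℝ) - 1)) +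
        (2 * (k : ℝ) / ((n : ℝ) ^ 2 * ((n : ℝ) - 1))) *
          ∑ i : Fin n, ∑ j ∈ Finset.univ.erase i, |(V * Vᵀ) i j| := by
  have hn₁ : (n : ℝ) - 1 ≠ 0 := (sub_pos.2 (Nat.one_lt_cast.2 hn)).ne'
  have hn₀ : (n : ℝ) ≠ 0 := by positivity
  rw [errP_two_eq_sqrt, Real.sq_sqrt (by positivity), Nat.cast_choose_two, inv_div,
    div_mul_eq_mul_div, two_mul_sum_opNorm_sq_card_eq_two hP hU]
  field_simp
  ring

end UniformFrame

theorem errP_two_two_le_iff {n k : ℕ} (hn : 2 ≤ n) {V W : Matrix (Fin n) (Fin k) ℝ}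
    (hPV : Vᵀ * V = 1) (hUV : Uniform n k V) (hPW : Wᵀ * W = 1) (hUW : Uniform n k W) :
    errP V 2 2 ≤ errP W 2 2 ↔
      ∑ i : Fin n, ∑ j ∈ Finset.univ.erase i, |(V * Vᵀ) i j| ≤
        ∑ i : Fin n, ∑ j ∈ Finset.univ.erase i, |(W * Wᵀ) i j| := by
  rw [← sq_le_sq₀ (by rw [errP_two_eq_sqrt]; positivity) (by rw [errP_two_eq_sqrt]; positivity),
    errP_two_two_sq hn hPV hUV, errP_two_two_sq hn hPW hUW, add_le_add_iff_left]
  rcases k.eq_zero_or_pos with rfl | hk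
  · simp
  · have hn₁ : (0 : ℝ) < n - 1 := sub_pos.2 (Nat.one_lt_cast.2 hn)
    exact mul_le_mul_iff_of_pos_left (div_pos (by positivity) (mul_pos (by positivity) hn₁))

theorem statement3 (n k : ℕ) (hn : 2 ≤ n) :
    (∀ V : Matrix (Fin n) (Fin k) ℝ, Vᵀ * V = 1 → Uniform n k V →
      errP V 2 2 ^ 2 =
        (k : ℝ) ^ 2 / (n : ℝ) ^ 2 +
          (k : ℝ) * ((n : ℝ) - k) / ((n : ℝ) ^ 2 * ((n : ℝ) - 1)) +
          (2 * (k : ℝ) / ((n : ℝ) ^ 2 * ((n : ℝ) - 1))) *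
            ∑ i : Fin n, ∑ j ∈ Finset.univ.erase i, |(V * Vᵀ) i j|) ∧
    (∀ V : Matrix (Fin n) (Fin k) ℝ, Vᵀ * V = 1 → Uniform n k V →
      ((∀ W : Matrix (Fin n) (Fin k) ℝ, Wᵀ * W = 1 → Uniform n k W →
          errP V 2 2 ≤ errP W 2 2) ↔
        (∀ W : Matrix (Fin n) (Fin k) ℝ, Wᵀ * W = 1 → Uniform n k W →
          ∑ i : Fin n, ∑ j ∈ Finset.univ.erase i, |(V * Vᵀ) i j| ≤
            ∑ i : Fin n, ∑ j ∈ Finset.univ.erase i, |(W * Wᵀ) i j|))) :=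
  ⟨fun _ hP hU => errP_two_two_sq hn hP hU, fun _ hPV hUV =>
    forall_congr' fun _ => forall₂_congr fun hPW hUW => errP_two_two_le_iff hn hPV hUV hPW hUW⟩

end FramesErasures
end
end

section
/- Let F be a real 2-uniform (n,k)-frame with associated graph G_F. Then either G_F contains an induced complete bipartite subgraph on 3 vertices, or G_F is switching equivalent to the complete graph on n vertices (in which case k = n−1). Consequently, if k < n−1 then e_3^∞(F) = k/n + 2·c_{n,k}; in particular, any two real 2-uniform (n,k)-frames have the same value of e_3^∞. -/
open Matrix
open scoped Classical

noncomputable section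

open scoped Matrix.Norms.L2Operator

namespace Matrix

variable {ι : Type*} [Fintype ι]

lemma l2_opNorm_le_of_sum_abs_le {A : Matrix ι ι ℝ} (hA : Aᵀ = A) {β : ℝ} (hβ : 0 ≤ β)
    (h : ∀ i, ∑ j, |A i j| ≤ β) : ‖A‖ ≤ β := by
  rw [l2_opNorm_def]
  refine ContinuousLinearMap.opNorm_le_bound _ hβ fun x => ?_
  refine (sq_le_sq₀ (by positivity) (by positivity)).mp ?_
  rw [EuclideanSpace.real_norm_sq_eq, mul_pow, EuclideanSpace.real_norm_sq_eq]
  simp only [LinearMap.coe_toContinuousLinearMap', LinearEquiv.trans_apply, ofLp_toLpLin,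
    toLin'_apply, mulVec, dotProduct]
  set y := x.ofLp
  have hrow : ∀ i, (∑ j, A i j * y j) ^ 2 ≤ β * ∑ j, |A i j| * y j ^ 2 := fun i =>
    calc (∑ j, A i j * y j) ^ 2 ≤ (∑ j, |A i j|) * ∑ j, |A i j| * y j ^ 2 :=
          Finset.sum_sq_le_sum_mul_sum_of_sq_le_mul _ (fun _ _ => abs_nonneg _)
            (fun _ _ => by positivity) fun j _ => le_of_eq (by rw [mul_pow, ← sq_abs]; ring)
      _ ≤ β * ∑ j, |A i j| * y j ^ 2 :=
          mul_le_mul_of_nonneg_right (h i) (by positivity)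
  calc ∑ i, (∑ j, A i j * y j) ^ 2 ≤ ∑ i, β * ∑ j, |A i j| * y j ^ 2 :=
        Finset.sum_le_sum fun i _ => hrow i
    _ = β * ∑ j, (∑ i, |A j i|) * y j ^ 2 := by
        rw [← Finset.mul_sum, Finset.sum_comm]
        simp_rw [Finset.sum_mul]
        congr! 3 with j _ i _
        rw [← congrFun (congrFun hA j) i, transpose_apply]
    _ ≤ β * ∑ j, β * y j ^ 2 := by gcongr with j; exact h j
    _ = β ^ 2 * ∑ j, y j ^ 2 := by rw [← Finset.mul_sum]; ring

lemma abs_le_l2_opNorm_of_mulVec_eq_smul {A : Matrix ι ι ℝ} {w : ι → ℝ} {μ : ℝ} (hw : w ≠ 0)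
    (h : A *ᵥ w = μ • w) : |μ| ≤ ‖A‖ := by
  have hpos : 0 < ‖WithLp.toLp 2 w‖ := norm_pos_iff.mpr (by simpa using hw)
  have := l2_opNorm_mulVec A (WithLp.toLp 2 w)
  rw [h, map_smul, norm_smul, Real.norm_eq_abs] at this
  exact le_of_mul_le_mul_right this hpos

lemma l2_opNorm_transpose_mul_self {m : Type*} [Fintype m] (A : Matrix m ι ℝ) :
    ‖Aᵀ * A‖ = ‖A * Aᵀ‖ := by
  rw [← conjTranspose_eq_transpose_of_trivial, l2_opNorm_conjTranspose_mul_self]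
  have := l2_opNorm_conjTranspose_mul_self Aᴴ
  rw [conjTranspose_conjTranspose, l2_opNorm_conjTranspose] at this
  exact this.symm

lemma eq_zero_or_eq_one_of_mulVec_eq_smul {K : Type*} [Field K] {P : Matrix ι ι K}
    (hP : IsIdempotentElem P) {w : ι → K} {μ : K} (hw : w ≠ 0) (h : P *ᵥ w = μ • w) :
    μ = 0 ∨ μ = 1 := by
  have : (μ * μ) • w = μ • w := by rw [← smul_smul, ← h, ← mulVec_smul, ← h, mulVec_mulVec, hP.eq]
  exact IsIdempotentElem.iff_eq_zero_or_one.mp (smul_left_injective K hw this)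

lemma l2_opNorm_one_le [DecidableEq ι] : ‖(1 : Matrix ι ι ℝ)‖ ≤ 1 := by
  rw [← diagonal_one, l2_opNorm_diagonal]
  simpa using pi_norm_const_le (ι := ι) (1 : ℝ)

end Matrix

namespace FramesErasures

lemma c_nonneg (n k : ℕ) : 0 ≤ c n k := Real.sqrt_nonneg _

lemma c_pos {n k : ℕ} (hk : 0 < k) (hkn : k < n) : 0 < c n k := by
  have hK : (0 : ℝ) < k := by exact_mod_cast hk
  have hKN : (k : ℝ) < n := by exact_mod_cast hkn
  have hN1 : (1 : ℝ) < n := by linarith [show (1 : ℝ) ≤ k by exact_mod_cast hk]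
  exact Real.sqrt_pos.mpr (div_pos (by nlinarith) (mul_pos (by positivity) (by linarith)))

lemma div_add_c_eq_one_iff {n k : ℕ} (hk : 0 < k) (hkn : k < n) :
    (k : ℝ) / n + c n k = 1 ↔ k + 1 = n := by
  have hK : (0 : ℝ) < k := by exact_mod_cast hk
  have hKN : (k : ℝ) < n := by exact_mod_cast hkn
  have hN1 : (1 : ℝ) < n := by linarith [show (1 : ℝ) ≤ k by exact_mod_cast hk]
  have hN : (0 : ℝ) < n := by linarith
  rw [← eq_sub_iff_add_eq', c, Real.sqrt_eq_iff_eq_sq (by positivity) (by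
    rw [sub_nonneg, div_le_one hN]; exact hKN.le), ← Nat.cast_inj (R := ℝ), Nat.cast_add,
    Nat.cast_one]
  rw [div_eq_iff (by positivity), one_sub_div hN.ne', div_pow]
  field_simp
  constructor
  · intro h
    have : ((n : ℝ) - k) * n * (k + 1 - n) = 0 := by linear_combination h
    have := (mul_eq_zero.mp this).resolve_left (mul_pos (sub_pos.mpr hKN) hN).ne'
    linarith
  · intro h
    rw [← h]
    ring

section diagS

variable {n : ℕ} (S : Finset (Fin n))

lemma diagS_transpose : (diagS S)ᵀ = diagS S := diagonal_transpose _

lemma diagS_mul_diagS : diagS S * diagS S = diagS S := by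
  rw [diagS, diagonal_mul_diagonal]
  congr 1
  ext i
  split_ifs <;> simp

lemma diagS_mulVec_apply (w : Fin n → ℝ) (i : Fin n) :
    (diagS S *ᵥ w) i = if i ∈ S then w i else 0 := by
  rw [diagS, mulVec_diagonal]
  split_ifs <;> simp

lemma diagS_mul_mul_diagS_apply (A : Matrix (Fin n) (Fin n) ℝ) (i j : Fin n) :
    (diagS S * A * diagS S) i j = if i ∈ S ∧ j ∈ S then A i j else 0 := by
  rw [diagS, mul_diagonal, diagonal_mul]
  split_ifs <;> simp_all

lemma norm_diagS_le_one : ‖diagS S‖ ≤ 1 := by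
  rw [diagS, l2_opNorm_diagonal, pi_norm_le_iff_of_nonneg zero_le_one]
  intro i
  split_ifs <;> simp

end diagS

def errorOp {n k : ℕ} (V : Matrix (Fin n) (Fin k) ℝ) (S : Finset (Fin n)) :
    Matrix (Fin k) (Fin k) ℝ :=
  Vᵀ * diagS S * V

lemma opNorm_errorOp {n k : ℕ} (V : Matrix (Fin n) (Fin k) ℝ) (S : Finset (Fin n)) :
    opNorm (errorOp V S) = ‖diagS S * (V * Vᵀ) * diagS S‖ := by
  have hE : errorOp V S = (diagS S * V)ᵀ * (diagS S * V) := by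
    rw [transpose_mul, diagS_transpose, errorOp]
    simp only [Matrix.mul_assoc]
    rw [← Matrix.mul_assoc (diagS S) (diagS S), diagS_mul_diagS]
  have hG : diagS S * (V * Vᵀ) * diagS S = (diagS S * V) * (diagS S * V)ᵀ := by
    simp only [transpose_mul, diagS_transpose, Matrix.mul_assoc]
  rw [hE, hG]
  exact l2_opNorm_transpose_mul_self _

lemma errInf_eq_of_forall_le {n k : ℕ} {V : Matrix (Fin n) (Fin k) ℝ} {m : ℕ} {β : ℝ}
    (hle : ∀ S : Finset (Fin n), S.card = m → opNorm (errorOp V S) ≤ β)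
    (hattained : ∃ S : Finset (Fin n), S.card = m ∧ opNorm (errorOp V S) = β) :
    errInf V m = β := by
  obtain ⟨S, hS, hSβ⟩ := hattained
  refine IsGreatest.csSup_eq ⟨⟨S, hS, hSβ.symm⟩, ?_⟩
  rintro x ⟨T, hT, rfl⟩
  exact hle T hT

lemma errInf_eq_zero_of_lt {n k : ℕ} (V : Matrix (Fin n) (Fin k) ℝ) {m : ℕ} (hnm : n < m) :
    errInf V m = 0 := by
  have hempty : {x : ℝ | ∃ S : Finset (Fin n), S.card = m ∧ x = opNorm (errorOp V S)} = ∅ := by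
    refine Set.eq_empty_of_forall_notMem fun x ⟨S, hS, _⟩ => ?_
    have := S.card_le_univ
    simp only [Fintype.card_fin] at this
    omega
  exact (congrArg sSup hempty).trans Real.sSup_empty

namespace TwoUniformFrame

variable {n k : ℕ} (F : TwoUniformFrame n k)

lemma Q_comm (i j : Fin n) : F.Q i j = F.Q j i := by
  simpa using congrFun (congrFun F.symm j) i

lemma Q_mul_self {i j : Fin n} (h : i ≠ j) : F.Q i j * F.Q i j = 1 := by
  rcases F.offdiag i j h with h' | h' <;> norm_num [h']

lemma gram_isIdempotentElem : IsIdempotentElem (F.V * F.Vᵀ) := by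
  rw [IsIdempotentElem, Matrix.mul_assoc, ← Matrix.mul_assoc F.Vᵀ, F.parseval, Matrix.one_mul]

lemma abs_gram_apply (i j : Fin n) :
    |(F.V * F.Vᵀ) i j| = if i = j then (k : ℝ) / n else c n k := by
  rw [F.gram]
  split_ifs with h
  · subst h
    simpa [F.diag] using by positivity
  · rcases F.offdiag i j h with h' | h' <;> simp [h, h', abs_of_nonneg (c_nonneg n k)]

lemma gram_mulVec_apply (w : Fin n → ℝ) (i : Fin n) :
    ((F.V * F.Vᵀ) *ᵥ w) i = k / n * w i + c n k * (F.Q *ᵥ w) i := by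
  rw [F.gram, add_mulVec, smul_mulVec, smul_mulVec, one_mulVec]
  rfl

lemma opNorm_errorOp_le_one (S : Finset (Fin n)) : opNorm (errorOp F.V S) ≤ 1 := by
  have hG : ‖F.V * F.Vᵀ‖ ≤ 1 :=
    calc ‖F.V * F.Vᵀ‖ = ‖F.Vᵀ * F.V‖ := (l2_opNorm_transpose_mul_self F.V).symm
      _ = ‖(1 : Matrix (Fin k) (Fin k) ℝ)‖ := by rw [F.parseval]
      _ ≤ 1 := l2_opNorm_one_le
  rw [opNorm_errorOp]
  calc ‖diagS S * (F.V * F.Vᵀ) * diagS S‖ ≤ ‖diagS S‖ * ‖F.V * F.Vᵀ‖ * ‖diagS S‖ :=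
        (l2_opNorm_mul _ _).trans (by gcongr; exact l2_opNorm_mul _ _)
    _ ≤ 1 * 1 * 1 := by gcongr <;> exact norm_diagS_le_one S
    _ = 1 := by norm_num

lemma opNorm_errorOp_le {S : Finset (Fin n)} (hS : S.Nonempty) :
    opNorm (errorOp F.V S) ≤ k / n + (S.card - 1) * c n k := by
  have hβ : 0 ≤ (k : ℝ) / n + (S.card - 1) * c n k := by
    have : (1 : ℝ) ≤ S.card := by exact_mod_cast hS.card_pos
    have := c_nonneg n k
    positivity
  rw [opNorm_errorOp]
  refine l2_opNorm_le_of_sum_abs_le ?_ hβ fun i => ?_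
  · simp only [transpose_mul, diagS_transpose, transpose_transpose, Matrix.mul_assoc]
  simp only [diagS_mul_mul_diagS_apply, apply_ite, abs_zero]
  by_cases hi : i ∈ S
  · refine le_of_eq ?_
    simp only [hi, true_and, ← Finset.sum_filter, Finset.filter_mem_eq_inter, Finset.univ_inter,
      abs_gram_apply]
    rw [← Finset.add_sum_erase S _ hi, if_pos rfl,
      Finset.sum_congr rfl fun j hj => if_neg (Finset.ne_of_mem_erase hj).symm,
      Finset.sum_const, Finset.card_erase_of_mem hi, nsmul_eq_mul, Nat.cast_pred hS.card_pos]
  · simpa [hi] using hβ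

lemma abs_le_opNorm_errorOp {S : Finset (Fin n)} {w : Fin n → ℝ} {μ : ℝ} (hw0 : w ≠ 0)
    (hw : ∀ j ∉ S, w j = 0) (hQw : ∀ i ∈ S, (F.Q *ᵥ w) i = μ * w i) :
    |k / n + c n k * μ| ≤ opNorm (errorOp F.V S) := by
  rw [opNorm_errorOp]
  refine abs_le_l2_opNorm_of_mulVec_eq_smul hw0 ?_
  have hDw : diagS S *ᵥ w = w := by
    ext i
    rw [diagS_mulVec_apply]
    split_ifs with hi
    · rfl
    · exact (hw i hi).symm
  ext i
  rw [← mulVec_mulVec, hDw, ← mulVec_mulVec, diagS_mulVec_apply, gram_mulVec_apply, Pi.smul_apply,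
    smul_eq_mul]
  split_ifs with hi
  · rw [hQw i hi]; ring
  · rw [hw i hi, mul_zero]

lemma Q_mulVec_apply_of_switching {S : Finset (Fin n)} {t : ℝ} {η w : Fin n → ℝ}
    (hη : ∀ i, η i = 1 ∨ η i = -1)
    (hQ : ∀ i ∈ S, ∀ j ∈ S, i ≠ j → F.Q i j = t * η i * η j) (hw : ∀ j ∉ S, w j = 0)
    {i : Fin n} (hi : i ∈ S) :
    (F.Q *ᵥ w) i = t * (η i * (η ⬝ᵥ w) - w i) := by
  have hterm : ∀ j, F.Q i j * w j = t * η i * (η j * w j) - if i = j then t * w i else 0 := by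
    intro j
    by_cases hij : i = j
    · subst hij
      rw [F.diag, if_pos rfl]
      rcases hη i with h | h <;> rw [h] <;> ring
    · rw [if_neg hij]
      by_cases hj : j ∈ S
      · rw [hQ i hi j hj hij]; ring
      · rw [hw j hj]; ring
  simp only [mulVec, dotProduct, hterm, Finset.sum_sub_distrib, ← Finset.mul_sum,
    Finset.sum_ite_eq, Finset.mem_univ, if_true]
  ring

lemma exists_switching {S : Finset (Fin n)} {t : ℝ} (ht : t = 1 ∨ t = -1) (z : Fin n)
    (h : ∀ i ∈ S, ∀ j ∈ S, z ≠ i → z ≠ j → i ≠ j → F.Q z i * F.Q z j * F.Q i j = t) :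
    ∃ η : Fin n → ℝ, (∀ i, η i = 1 ∨ η i = -1) ∧
      ∀ i ∈ S, ∀ j ∈ S, i ≠ j → F.Q i j = t * η i * η j := by
  have htt : t * t = 1 := by rcases ht with rfl | rfl <;> norm_num
  -- switch by the signs of the edges at `z`; the triangles through `z` then fix every other sign
  refine ⟨fun i => if i = z then t else F.Q z i, fun i => ?_, fun i hi j hj hij => ?_⟩
  · dsimp only
    split_ifs with h
    exacts [ht, F.offdiag z i (Ne.symm h)]
  · dsimp only
    split_ifs with hiz hjz hjz
    · exact absurd (hiz.trans hjz.symm) hij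
    · subst hiz
      linear_combination (-F.Q i j) * htt
    · subst hjz
      rw [F.Q_comm]
      linear_combination (-F.Q j i) * htt
    · have hzi := F.Q_mul_self (Ne.symm hiz)
      have hzj := F.Q_mul_self (Ne.symm hjz)
      linear_combination (F.Q z i * F.Q z j) * h i hi j hj (Ne.symm hiz) (Ne.symm hjz) hij
        - F.Q i j * hzi - F.Q i j * F.Q z i * F.Q z i * hzj

lemma triangle_sign {p q r : Fin n} (hpq : p ≠ q) (hpr : p ≠ r) (hqr : q ≠ r) :
    F.Q p q * F.Q p r * F.Q q r = 1 ∨ F.Q p q * F.Q p r * F.Q q r = -1 := by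
  rcases F.offdiag p q hpq with h₁ | h₁ <;> rcases F.offdiag p r hpr with h₂ | h₂ <;>
    rcases F.offdiag q r hqr with h₃ | h₃ <;> norm_num [h₁, h₂, h₃]

lemma exists_switching_of_triangle {p q r : Fin n} (hpq : p ≠ q) (hpr : p ≠ r) (hqr : q ≠ r) :
    ∃ η : Fin n → ℝ, (∀ i, η i = 1 ∨ η i = -1) ∧ ∀ i ∈ ({p, q, r} : Finset (Fin n)),
      ∀ j ∈ ({p, q, r} : Finset (Fin n)), i ≠ j →
        F.Q i j = F.Q p q * F.Q p r * F.Q q r * η i * η j := by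
  refine F.exists_switching (F.triangle_sign hpq hpr hqr) p fun i hi j hj hpi hpj hij => ?_
  simp only [Finset.mem_insert, Finset.mem_singleton] at hi hj
  rcases hi with rfl | rfl | rfl <;> rcases hj with rfl | rfl | rfl <;> try contradiction
  · rfl
  · rw [F.Q_comm j i]; ring

/-- A triangle carrying an even number of edges of `frameGraph F`. -/
def HasBalancedTriangle : Prop :=
  ∃ p q r : Fin n, p ≠ q ∧ p ≠ r ∧ q ≠ r ∧ F.Q p q * F.Q p r * F.Q q r = 1

lemma triangle_eq_neg_one_of_not_hasBalancedTriangle (h : ¬F.HasBalancedTriangle) {p q r : Fin n}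
    (hpq : p ≠ q) (hpr : p ≠ r) (hqr : q ≠ r) : F.Q p q * F.Q p r * F.Q q r = -1 :=
  (F.triangle_sign hpq hpr hqr).resolve_left fun h1 => h ⟨p, q, r, hpq, hpr, hqr, h1⟩

lemma isCompleteBipartite_induce_of_switching {S : Finset (Fin n)} {η : Fin n → ℝ}
    (hη : ∀ i, η i = 1 ∨ η i = -1)
    (hQ : ∀ i ∈ S, ∀ j ∈ S, i ≠ j → F.Q i j = η i * η j) :
    IsCompleteBipartite ((frameGraph F).induce (S : Set (Fin n))) := by
  refine ⟨{v | η v = -1}, fun i j => ?_⟩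
  show (i.1 ≠ j.1 ∧ F.Q i j = -1) ↔ _
  by_cases hij : i.1 = j.1
  · rw [Subtype.ext hij]
    simp
  · rw [hQ i i.2 j j.2 hij]
    rcases hη i with h₁ | h₁ <;> rcases hη j with h₂ | h₂ <;> norm_num [h₁, h₂, hij]

lemma hasInducedCompleteBipartite_of_hasBalancedTriangle (h : F.HasBalancedTriangle) :
    HasInducedCompleteBipartite (frameGraph F) 3 := by
  obtain ⟨p, q, r, hpq, hpr, hqr, hbal⟩ := h
  obtain ⟨η, hη, hQ⟩ := F.exists_switching_of_triangle hpq hpr hqr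
  refine ⟨{p, q, r}, Finset.card_eq_three.mpr ⟨p, q, r, hpq, hpr, hqr, rfl⟩, ?_⟩
  simp only [hbal, one_mul] at hQ
  exact F.isCompleteBipartite_induce_of_switching hη hQ

lemma exists_switching_of_not_hasBalancedTriangle (hn : 0 < n) (h : ¬F.HasBalancedTriangle) :
    ∃ η : Fin n → ℝ, (∀ i, η i = 1 ∨ η i = -1) ∧
      ∀ i ∈ Finset.univ, ∀ j ∈ Finset.univ, i ≠ j → F.Q i j = -1 * η i * η j :=
  F.exists_switching (Or.inr rfl) ⟨0, hn⟩ fun _ _ _ _ hzi hzj hij =>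
    F.triangle_eq_neg_one_of_not_hasBalancedTriangle h hzi hzj hij

lemma seidel_frameGraph (i j : Fin n) : seidel (frameGraph F) i j = F.Q i j := by
  by_cases hij : i = j
  · subst hij
    simp [seidel, F.diag]
  · rcases F.offdiag i j hij with h | h <;> norm_num [seidel, frameGraph, hij, h]

lemma switchingEquivalent_top_of_not_hasBalancedTriangle (hn : 0 < n)
    (h : ¬F.HasBalancedTriangle) : SwitchingEquivalent (frameGraph F) ⊤ := by
  obtain ⟨η, hη, hQ⟩ := F.exists_switching_of_not_hasBalancedTriangle hn h
  refine ⟨Equiv.refl _, η, hη, fun i j => ?_⟩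
  rw [Equiv.refl_apply, Equiv.refl_apply, seidel_frameGraph]
  by_cases hij : i = j
  · simp [seidel, hij, F.diag]
  · rw [hQ i (Finset.mem_univ _) j (Finset.mem_univ _) hij]
    rcases hη i with h₁ | h₁ <;> rcases hη j with h₂ | h₂ <;> norm_num [seidel, hij, h₁, h₂]

lemma exists_mulVec_eq_card_sub_one_smul_of_switching {S : Finset (Fin n)} {t : ℝ}
    {η : Fin n → ℝ} (hη : ∀ i, η i = 1 ∨ η i = -1)
    (hQ : ∀ i ∈ S, ∀ j ∈ S, i ≠ j → F.Q i j = t * η i * η j) (hS : S.Nonempty) :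
    ∃ w : Fin n → ℝ, w ≠ 0 ∧ (∀ j ∉ S, w j = 0) ∧
      ∀ i ∈ S, (F.Q *ᵥ w) i = t * (S.card - 1) * w i := by
  have hηη : ∀ i, η i * η i = 1 := fun i => by rcases hη i with h | h <;> norm_num [h]
  set w : Fin n → ℝ := fun j => if j ∈ S then η j else 0
  have hw : ∀ j ∉ S, w j = 0 := fun j hj => if_neg hj
  have hηw : η ⬝ᵥ w = S.card := by simp [w, dotProduct, hηη]
  obtain ⟨p, hp⟩ := hS
  refine ⟨w, fun h0 => ?_, hw, fun i hi => ?_⟩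
  · have := congrFun h0 p
    simp only [w, if_pos hp, Pi.zero_apply] at this
    rcases hη p with h | h <;> norm_num [h] at this
  · rw [F.Q_mulVec_apply_of_switching hη hQ hw hi, hηw]
    simp only [w, if_pos hi]
    ring

lemma exists_mulVec_eq_neg_smul_of_switching {S : Finset (Fin n)} {t : ℝ} {η : Fin n → ℝ}
    (hη : ∀ i, η i = 1 ∨ η i = -1)
    (hQ : ∀ i ∈ S, ∀ j ∈ S, i ≠ j → F.Q i j = t * η i * η j) {p q : Fin n} (hp : p ∈ S)
    (hq : q ∈ S) (hpq : p ≠ q) :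
    ∃ w : Fin n → ℝ, w ≠ 0 ∧ (∀ j ∉ S, w j = 0) ∧ ∀ i ∈ S, (F.Q *ᵥ w) i = -t * w i := by
  set w : Fin n → ℝ := Pi.single p (η q) - Pi.single q (η p)
  have hw : ∀ j ∉ S, w j = 0 := fun j hj => by
    simp [w, ne_of_mem_of_not_mem hp hj |>.symm,
      ne_of_mem_of_not_mem hq hj |>.symm]
  have hηw : η ⬝ᵥ w = 0 := by
    simp only [w, dotProduct_sub, dotProduct_single]
    ring
  refine ⟨w, fun h0 => ?_, hw, fun i hi => ?_⟩
  · have := congrFun h0 q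
    simp only [w, Pi.sub_apply, Pi.single_eq_same, Pi.single_eq_of_ne hpq.symm,
      Pi.zero_apply] at this
    rcases hη p with h | h <;> norm_num [h] at this
  · rw [F.Q_mulVec_apply_of_switching hη hQ hw hi, hηw]
    ring

lemma le_opNorm_errorOp_of_balanced {p q r : Fin n} (hpq : p ≠ q) (hpr : p ≠ r) (hqr : q ≠ r)
    (hbal : F.Q p q * F.Q p r * F.Q q r = 1) :
    k / n + 2 * c n k ≤ opNorm (errorOp F.V {p, q, r}) := by
  obtain ⟨η, hη, hQ⟩ := F.exists_switching_of_triangle hpq hpr hqr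
  rw [hbal] at hQ
  obtain ⟨w, hw0, hw, hQw⟩ :=
    F.exists_mulVec_eq_card_sub_one_smul_of_switching hη hQ (Finset.insert_nonempty _ _)
  have := (le_abs_self _).trans (F.abs_le_opNorm_errorOp hw0 hw hQw)
  rw [Finset.card_eq_three.mpr ⟨p, q, r, hpq, hpr, hqr, rfl⟩] at this
  norm_num at this
  linarith

lemma div_add_c_le_opNorm_errorOp_of_unbalanced {p q r : Fin n} (hpq : p ≠ q) (hpr : p ≠ r)
    (hqr : q ≠ r) (hunbal : F.Q p q * F.Q p r * F.Q q r = -1) :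
    k / n + c n k ≤ opNorm (errorOp F.V {p, q, r}) := by
  obtain ⟨η, hη, hQ⟩ := F.exists_switching_of_triangle hpq hpr hqr
  rw [hunbal] at hQ
  obtain ⟨w, hw0, hw, hQw⟩ := F.exists_mulVec_eq_neg_smul_of_switching hη hQ
    (Finset.mem_insert_self p _) (by simp) hpq
  have := (le_abs_self _).trans (F.abs_le_opNorm_errorOp hw0 hw hQw)
  simpa using this

lemma succ_eq_of_not_hasBalancedTriangle (hk : 0 < k) (hkn : k < n)
    (h : ¬F.HasBalancedTriangle) : k + 1 = n := by
  obtain ⟨η, hη, hQ⟩ := F.exists_switching_of_not_hasBalancedTriangle (by omega) h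
  obtain ⟨w, hw0, -, hQw⟩ := F.exists_mulVec_eq_neg_smul_of_switching hη hQ
    (Finset.mem_univ ⟨0, by omega⟩) (Finset.mem_univ ⟨1, by omega⟩) (by simp [Fin.ext_iff])
  have hGw : (F.V * F.Vᵀ) *ᵥ w = (k / n + c n k) • w := by
    ext i
    rw [gram_mulVec_apply, hQw i (Finset.mem_univ _), Pi.smul_apply, smul_eq_mul]
    ring
  rcases eq_zero_or_eq_one_of_mulVec_eq_smul F.gram_isIdempotentElem hw0 hGw with h0 | h1
  · have : (0 : ℝ) < k / n := div_pos (by exact_mod_cast hk) (by exact_mod_cast hk.trans hkn)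
    linarith [c_nonneg n k]
  · exact (div_add_c_eq_one_iff hk hkn).mp h1

lemma errInf_three_of_hasBalancedTriangle (h : F.HasBalancedTriangle) :
    errInf F.V 3 = k / n + 2 * c n k := by
  obtain ⟨p, q, r, hpq, hpr, hqr, hbal⟩ := h
  have hle : ∀ S : Finset (Fin n), S.card = 3 → opNorm (errorOp F.V S) ≤ k / n + 2 * c n k :=
    fun S hS => by
      have := F.opNorm_errorOp_le (S := S) (Finset.card_pos.mp (by omega))
      rw [hS] at this
      norm_num at this
      exact this
  have hcard : ({p, q, r} : Finset (Fin n)).card = 3 :=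
    Finset.card_eq_three.mpr ⟨p, q, r, hpq, hpr, hqr, rfl⟩
  exact errInf_eq_of_forall_le hle ⟨_, hcard,
    le_antisymm (hle _ hcard) (F.le_opNorm_errorOp_of_balanced hpq hpr hqr hbal)⟩

lemma errInf_three_of_succ_eq (hk : 0 < k) (hkn : k < n) (hsucc : k + 1 = n) (hn : 3 ≤ n) :
    errInf F.V 3 = 1 := by
  have hκc : (k : ℝ) / n + c n k = 1 := (div_add_c_eq_one_iff hk hkn).mpr hsucc
  have hnb : ¬F.HasBalancedTriangle := fun ⟨p, q, r, hpq, hpr, hqr, hbal⟩ => by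
    have := (F.le_opNorm_errorOp_of_balanced hpq hpr hqr hbal).trans (F.opNorm_errorOp_le_one _)
    linarith [c_pos hk hkn]
  have hval : ∀ S : Finset (Fin n), S.card = 3 → opNorm (errorOp F.V S) = 1 := fun S hS => by
    obtain ⟨p, q, r, hpq, hpr, hqr, rfl⟩ := Finset.card_eq_three.mp hS
    refine le_antisymm (F.opNorm_errorOp_le_one _) (hκc ▸ ?_)
    exact F.div_add_c_le_opNorm_errorOp_of_unbalanced hpq hpr hqr
      (F.triangle_eq_neg_one_of_not_hasBalancedTriangle hnb hpq hpr hqr)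
  obtain ⟨S, -, hS⟩ := Finset.exists_subset_card_eq
    (show 3 ≤ (Finset.univ : Finset (Fin n)).card by simpa using hn)
  exact errInf_eq_of_forall_le (fun S hS => (hval S hS).le) ⟨S, hS, hval S hS⟩

lemma hasBalancedTriangle_of_succ_lt (hk : 0 < k) (hlt : k + 1 < n) : F.HasBalancedTriangle :=
  by_contra fun h => by
    have := F.succ_eq_of_not_hasBalancedTriangle hk (by omega) h
    omega

end TwoUniformFrame

theorem statement7 (n k : ℕ) (hk : 1 ≤ k) (hkn : k < n) (F : TwoUniformFrame n k) :
    (HasInducedCompleteBipartite (frameGraph F) 3 ∨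
      (SwitchingEquivalent (frameGraph F) (⊤ : SimpleGraph (Fin n)) ∧ k = n - 1)) ∧
    (k < n - 1 → errInf F.V 3 = (k : ℝ) / n + 2 * c n k) ∧
    (∀ F' : TwoUniformFrame n k, errInf F.V 3 = errInf F'.V 3) := by
  refine ⟨?_, fun hlt => F.errInf_three_of_hasBalancedTriangle
    (F.hasBalancedTriangle_of_succ_lt hk (by omega)), fun F' => ?_⟩
  · by_cases h : F.HasBalancedTriangle
    · exact Or.inl (F.hasInducedCompleteBipartite_of_hasBalancedTriangle h)
    · have := F.succ_eq_of_not_hasBalancedTriangle hk hkn h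
      exact Or.inr ⟨F.switchingEquivalent_top_of_not_hasBalancedTriangle (by omega) h, by omega⟩
  obtain hlt | hsucc : k + 1 < n ∨ k + 1 = n := by omega
  · rw [F.errInf_three_of_hasBalancedTriangle (F.hasBalancedTriangle_of_succ_lt hk hlt),
      F'.errInf_three_of_hasBalancedTriangle (F'.hasBalancedTriangle_of_succ_lt hk hlt)]
  by_cases hn : 3 ≤ n
  · rw [F.errInf_three_of_succ_eq hk hkn hsucc hn, F'.errInf_three_of_succ_eq hk hkn hsucc hn]
  · rw [errInf_eq_zero_of_lt F.V (by omega), errInf_eq_zero_of_lt F'.V (by omega)]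

end FramesErasures
end
end

section
/- Let m ≥ 3 and s ≥ 1. Let Q⁽⁰⁾, Q⁽¹⁾, Q⁽ˢ⁾ be Seidel adjacency matrices of graphs on m vertices belonging to 𝒢_m^(0), 𝒢_m^(1), and 𝒢_m^(s) respectively, and let λ⁽⁰⁾, λ⁽¹⁾, λ⁽ˢ⁾ be their largest eigenvalues. Then λ⁽⁰⁾ = m − 1 ≥ λ⁽¹⁾ = m/2 − 2 + √(m²/4 + m − 3) ≥ λ⁽ˢ⁾. -/
open Matrix
open scoped Classical

noncomputable section

namespace FramesErasures

/-!
Switching conjugates the Seidel matrix by a signed permutation matrix, so it preserves eigenvalues,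
and switching with respect to the set where an eigenvector is nonnegative makes that eigenvector
entrywise nonnegative. If `w ≥ 0` is an eigenvector for `μ > -1` of a graph with an edge `ab`, the
eigen-equations at `a` and `b` together with their sum over all vertices give
`4 ≤ (μ + 3) (m - 1 - μ)`, i.e. `μ ≤ m / 2 - 2 + √(m² / 4 + m - 3)`. A graph outside `𝒢_m^(0)` has
an edge in every switching, so this bounds its whole spectrum; a graph with exactly one edge attains
the bound, and the edgeless graph has largest eigenvalue `m - 1`.
-/

section Switching

variable {α : Type*}

def switch (G : SimpleGraph α) (S : Set α) : SimpleGraph α where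
  Adj i j := i ≠ j ∧ (G.Adj i j ↔ (i ∈ S ↔ j ∈ S))
  symm := ⟨fun i j h => ⟨h.1.symm, by rw [G.adj_comm]; exact h.2.trans Iff.comm⟩⟩
  loopless := ⟨fun i h => h.1 rfl⟩

def switchSign (S : Set α) (i : α) : ℝ := if i ∈ S then 1 else -1

lemma switchSign_eq_one_or (S : Set α) (i : α) : switchSign S i = 1 ∨ switchSign S i = -1 := by
  unfold switchSign; split_ifs <;> simp

variable [DecidableEq α]

lemma seidel_switch (G : SimpleGraph α) (S : Set α) (i j : α) :
    seidel (switch G S) i j = switchSign S i * switchSign S j * seidel G i j := by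
  simp only [seidel, switch, switchSign, of_apply]
  by_cases hij : i = j
  · simp [hij]
  by_cases hi : i ∈ S <;> by_cases hj : j ∈ S <;> by_cases hG : G.Adj i j <;> simp [hij, hi, hj, hG]

lemma switchingEquivalent_switch (G : SimpleGraph α) (S : Set α) :
    SwitchingEquivalent G (switch G S) :=
  ⟨1, switchSign S, switchSign_eq_one_or S, seidel_switch G S⟩

lemma SwitchingEquivalent.symm {G H : SimpleGraph α} (h : SwitchingEquivalent G H) :
    SwitchingEquivalent H G := by
  obtain ⟨σ, ε, hε, hGH⟩ := h
  have hε2 : ∀ i, ε i * ε i = 1 := fun i => mul_self_eq_one_iff.mpr (hε i)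
  refine ⟨σ.symm, fun i => ε (σ.symm i), fun i => hε _, fun i j => ?_⟩
  rw [hGH (σ.symm i) (σ.symm j), Equiv.apply_symm_apply, Equiv.apply_symm_apply]
  linear_combination (-(seidel G i j) * ε (σ.symm j) * ε (σ.symm j)) * hε2 (σ.symm i)
    - seidel G i j * hε2 (σ.symm j)

end Switching

section Eigenvalues

open Finset

variable {α : Type*} [Fintype α]

def IsEigenvalue (A : Matrix α α ℝ) (μ : ℝ) : Prop :=
  ∃ v, v ≠ 0 ∧ A *ᵥ v = μ • v

lemma mulVec_conj_signedPerm {A B : Matrix α α ℝ} (σ : Equiv.Perm α) (ε : α → ℝ)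
    (hB : ∀ i j, B i j = ε i * ε j * A (σ i) (σ j)) (hε : ∀ i, ε i * ε i = 1) (v : α → ℝ) :
    B *ᵥ (fun i => ε i * v (σ i)) = fun i => ε i * (A *ᵥ v) (σ i) := by
  ext i
  simp only [mulVec, dotProduct, hB, mul_sum]
  rw [← Equiv.sum_comp σ (fun k => ε i * (A (σ i) k * v k))]
  refine sum_congr rfl fun j _ => ?_
  linear_combination ε i * A (σ i) (σ j) * v (σ j) * hε j

variable [DecidableEq α]

lemma SwitchingEquivalent.isEigenvalue {G H : SimpleGraph α} (h : SwitchingEquivalent G H)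
    {μ : ℝ} (hμ : IsEigenvalue (seidel G) μ) : IsEigenvalue (seidel H) μ := by
  obtain ⟨σ, ε, hε, hGH⟩ := h
  obtain ⟨v, hv, he⟩ := hμ
  have hε2 : ∀ i, ε i * ε i = 1 := fun i => mul_self_eq_one_iff.mpr (hε i)
  refine ⟨fun i => ε i * v (σ i), fun h0 => hv ?_, ?_⟩
  · ext k
    have := congrFun h0 (σ.symm k)
    simp only [Equiv.apply_symm_apply, Pi.zero_apply, mul_eq_zero] at this
    exact this.resolve_left fun h => by simpa [h] using hε2 (σ.symm k)
  · rw [mulVec_conj_signedPerm σ ε hGH hε2, he]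
    ext i
    simp only [Pi.smul_apply, smul_eq_mul]
    ring

lemma SwitchingEquivalent.isMaxEigenvalue {m : ℕ} {G H : SimpleGraph (Fin m)}
    (h : SwitchingEquivalent G H) {l : ℝ} (hl : IsMaxEigenvalue (seidel G) l) :
    IsMaxEigenvalue (seidel H) l :=
  ⟨h.isEigenvalue hl.1, fun μ hμ => hl.2 μ (h.symm.isEigenvalue hμ)⟩

lemma IsMaxEigenvalue.unique {m : ℕ} {A : Matrix (Fin m) (Fin m) ℝ} {l l' : ℝ}
    (h : IsMaxEigenvalue A l) (h' : IsMaxEigenvalue A l') : l = l' :=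
  le_antisymm (h'.2 l h.1) (h.2 l' h'.1)

lemma exists_switch_nonneg_eigenvector (G : SimpleGraph α) {μ : ℝ}
    (hμ : IsEigenvalue (seidel G) μ) :
    ∃ S : Set α, ∃ w : α → ℝ, 0 ≤ w ∧ w ≠ 0 ∧ seidel (switch G S) *ᵥ w = μ • w := by
  obtain ⟨v, hv, he⟩ := hμ
  have habs : (fun i => switchSign {i | 0 ≤ v i} i * v ((1 : Equiv.Perm α) i)) = |v| := by
    ext i
    by_cases hi : 0 ≤ v i
    · simp [switchSign, hi, abs_of_nonneg hi]
    · simp [switchSign, hi, abs_of_neg (not_le.mp hi)]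
  refine ⟨{i | 0 ≤ v i}, |v|, abs_nonneg v, by simpa using hv, ?_⟩
  rw [← habs, mulVec_conj_signedPerm 1 _ (seidel_switch G _)
    (fun i => mul_self_eq_one_iff.mpr (switchSign_eq_one_or _ i)), he]
  ext i
  simp only [Pi.smul_apply, smul_eq_mul, Equiv.Perm.one_apply]
  ring

end Eigenvalues

def oneEdgeRoot (m : ℝ) : ℝ := m / 2 - 2 + √(m ^ 2 / 4 + m - 3)

lemma le_oneEdgeRoot {m x : ℝ} (h : 4 ≤ (x + 3) * (m - 1 - x)) : x ≤ oneEdgeRoot m := by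
  have : |x - (m / 2 - 2)| ≤ √(m ^ 2 / 4 + m - 3) := Real.abs_le_sqrt (by nlinarith)
  unfold oneEdgeRoot
  linarith [le_abs_self (x - (m / 2 - 2))]

lemma oneEdgeRoot_le {m : ℝ} (hm : 0 ≤ m) : oneEdgeRoot m ≤ m - 1 := by
  have : √(m ^ 2 / 4 + m - 3) ≤ m / 2 + 1 := Real.sqrt_le_iff.mpr ⟨by linarith, by nlinarith⟩
  unfold oneEdgeRoot
  linarith

lemma oneEdgeRoot_quadratic_eq_zero {m : ℝ} (hm : 2 ≤ m) :
    oneEdgeRoot m ^ 2 - (m - 4) * oneEdgeRoot m - 3 * m + 7 = 0 := by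
  have := Real.sq_sqrt (show 0 ≤ m ^ 2 / 4 + m - 3 by nlinarith)
  unfold oneEdgeRoot
  linear_combination this

section Spectrum

open Finset

variable {α : Type*} [Fintype α] [DecidableEq α]

lemma seidel_mulVec_apply (G : SimpleGraph α) (v : α → ℝ) (i : α) :
    (seidel G *ᵥ v) i = ∑ j, v j - v i - 2 * ∑ j with G.Adj i j, v j := by
  have hterm (j : α) : seidel G i j * v j
      = v j - (if i = j then v j else 0) - 2 * (if G.Adj i j then v j else 0) := by
    by_cases hij : i = j
    · subst hij; simp [seidel]
    by_cases hG : G.Adj i j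
    · simp only [seidel, of_apply, hij, ↓reduceIte, hG, neg_mul, one_mul, sub_zero]; ring
    · simp [seidel, hij, hG]
  simp only [mulVec, dotProduct, hterm, sum_sub_distrib, ← mul_sum, sum_ite_eq, mem_univ,
    if_true, sum_filter]

lemma sum_seidel_mulVec (G : SimpleGraph α) (v : α → ℝ) :
    ∑ i, (seidel G *ᵥ v) i
      = (Fintype.card α - 1) * ∑ i, v i - 2 * ∑ i, ∑ j with G.Adj i j, v j := by
  simp only [seidel_mulVec_apply, sum_sub_distrib, sum_const, card_univ, nsmul_eq_mul, ← mul_sum]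
  ring

lemma le_oneEdgeRoot_of_adj {G : SimpleGraph α} {a b : α} (hab : G.Adj a b) {μ : ℝ}
    {w : α → ℝ} (hw : 0 ≤ w) (hw0 : w ≠ 0) (he : seidel G *ᵥ w = μ • w) :
    μ ≤ oneEdgeRoot (Fintype.card α) := by
  have hm : (2 : ℝ) ≤ Fintype.card α := by
    have := card_le_univ ({a, b} : Finset α)
    rw [card_pair hab.ne] at this
    exact_mod_cast this
  rcases le_or_gt μ (-1) with hμ | hμ
  · exact hμ.trans (le_oneEdgeRoot (by linarith))
  apply le_oneEdgeRoot
  set S := ∑ i, w i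
  set N : α → ℝ := fun i => ∑ j with G.Adj i j, w j
  have heq (i : α) : S - w i - 2 * N i = μ * w i := by
    rw [← seidel_mulVec_apply, he, Pi.smul_apply, smul_eq_mul]
  have hsum : 2 * ∑ i, N i = (Fintype.card α - 1 - μ) * S := by
    have := sum_seidel_mulVec G w
    rw [he] at this
    simp only [Pi.smul_apply, smul_eq_mul, ← mul_sum] at this
    linarith
  have hN (i : α) : 0 ≤ N i := sum_nonneg fun j _ => hw j
  have hNa : w b ≤ N a := single_le_sum (fun j _ => hw j) (by simpa using hab)
  have hNb : w a ≤ N b := single_le_sum (fun j _ => hw j) (by simpa using hab.symm)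
  have hNab : N a + N b ≤ ∑ i, N i := by
    rw [← sum_pair hab.ne]
    exact sum_le_sum_of_subset_of_nonneg (subset_univ _) fun i _ _ => hN i
  have hS : 0 < S := by
    obtain ⟨i, hi⟩ := Function.ne_iff.mp hw0
    exact (lt_of_le_of_ne (hw i) (Ne.symm hi)).trans_le
      (single_le_sum (fun j _ => hw j) (mem_univ i))
  -- adding the eigen-equations at `a` and `b` and using `w b ≤ N a`, `w a ≤ N b`
  have h2S : 2 * S ≤ (μ + 3) * (N a + N b) := by nlinarith [heq a, heq b]
  have : 4 * S ≤ (μ + 3) * (Fintype.card α - 1 - μ) * S := by nlinarith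
  exact le_of_mul_le_mul_right (by linarith) hS

lemma seidel_bot_mulVec_apply (v : α → ℝ) (i : α) :
    (seidel (⊥ : SimpleGraph α) *ᵥ v) i = ∑ j, v j - v i := by
  simp [seidel_mulVec_apply]

lemma isEigenvalue_seidel_bot [Nonempty α] :
    IsEigenvalue (seidel (⊥ : SimpleGraph α)) (Fintype.card α - 1) := by
  refine ⟨fun _ => 1, fun h => by simpa using congrFun h (Classical.arbitrary α), ?_⟩
  ext i
  simp [seidel_bot_mulVec_apply]

lemma eq_or_eq_of_isEigenvalue_seidel_bot {μ : ℝ}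
    (h : IsEigenvalue (seidel (⊥ : SimpleGraph α)) μ) : μ = Fintype.card α - 1 ∨ μ = -1 := by
  obtain ⟨v, hv, he⟩ := h
  have heq (i : α) : ∑ j, v j - v i = μ * v i := by rw [← seidel_bot_mulVec_apply, he]; rfl
  by_cases hS : ∑ j, v j = 0
  · obtain ⟨i, hi⟩ := Function.ne_iff.mp hv
    exact Or.inr (mul_right_cancel₀ hi (by linarith [heq i]))
  · have := sum_congr rfl fun i (_ : i ∈ univ) => heq i
    simp only [sum_sub_distrib, sum_const, card_univ, nsmul_eq_mul, ← mul_sum] at this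
    exact Or.inl (mul_right_cancel₀ hS (by linarith)).symm

lemma isMaxEigenvalue_seidel_bot {m : ℕ} (hm : 1 ≤ m) :
    IsMaxEigenvalue (seidel (⊥ : SimpleGraph (Fin m))) (m - 1) := by
  have : Nonempty (Fin m) := ⟨⟨0, hm⟩⟩
  have hm1 := isEigenvalue_seidel_bot (α := Fin m)
  rw [Fintype.card_fin] at hm1
  refine ⟨hm1, fun μ hμ => ?_⟩
  rcases eq_or_eq_of_isEigenvalue_seidel_bot hμ with h | h
  · simp [h]
  · rw [h]
    linarith [(Nat.one_le_cast (α := ℝ)).mpr hm]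

lemma isEigenvalue_seidel_of_edgeSet_eq_singleton {G : SimpleGraph α} {a b : α}
    (hG : G.edgeSet = {s(a, b)}) (hm : 3 ≤ Fintype.card α) :
    IsEigenvalue (seidel G) (oneEdgeRoot (Fintype.card α)) := by
  set m : ℝ := (Fintype.card α : ℝ)
  set μ := oneEdgeRoot m
  have hm3 : (3 : ℝ) ≤ m := Nat.ofNat_le_cast.mpr hm
  have hq : μ ^ 2 - (m - 4) * μ - 3 * m + 7 = 0 := oneEdgeRoot_quadratic_eq_zero (by linarith)
  have hadj (i j : α) : G.Adj i j ↔ (i = a ∧ j = b) ∨ (i = b ∧ j = a) := by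
    rw [← G.mem_edgeSet, hG, Set.mem_singleton_iff, Sym2.eq_iff]
  have hab : a ≠ b := ((hadj a b).mpr (Or.inl ⟨rfl, rfl⟩)).ne
  -- the entries `m - 2` on the edge and `μ + 1` off it
  set v : α → ℝ := fun i => μ + 1 + if i ∈ ({a, b} : Finset α) then m - 3 - μ else 0
  have hS : ∑ i, v i = m * (μ + 1) + 2 * (m - 3 - μ) := by
    rw [sum_add_distrib, sum_ite_mem, univ_inter, sum_pair hab]
    simp only [sum_const, card_univ, smul_add, nsmul_eq_mul, mul_one, m]
    ring
  have hva : v a = m - 2 := by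
    simp only [v, mem_insert, mem_singleton, true_or, ↓reduceIte]
    ring
  refine ⟨v, fun h => by simp only [h, Pi.zero_apply] at hva; linarith, ?_⟩
  ext i
  rw [seidel_mulVec_apply, hS, sum_filter, Pi.smul_apply, smul_eq_mul]
  by_cases hia : i = a
  · subst hia
    simp only [v, hadj, hab, mem_insert, mem_singleton, or_false, or_true, true_and, false_and,
      ↓reduceIte, sum_ite_eq', mem_univ]
    ring
  by_cases hib : i = b
  · subst hib
    simp only [v, hadj, hab.symm, mem_insert, mem_singleton, or_true, true_or, true_and, false_and,
      false_or, ↓reduceIte, sum_ite_eq', mem_univ]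
    ring
  · simp only [v, hadj, hia, hib, mem_insert, mem_singleton, or_self, false_and, ↓reduceIte,
      add_zero, sum_const_zero, mul_zero, sub_zero]
    linear_combination -hq

lemma MinSwitchEdges.le_oneEdgeRoot {G : SimpleGraph α} {s : ℕ} (hG : MinSwitchEdges G s)
    (hs : 1 ≤ s) {μ : ℝ} (hμ : IsEigenvalue (seidel G) μ) :
    μ ≤ oneEdgeRoot (Fintype.card α) := by
  obtain ⟨S, w, hw, hw0, he⟩ := exists_switch_nonneg_eigenvector G hμ
  have hcard : s ≤ (switch G S).edgeSet.ncard := hG.2 ⟨_, switchingEquivalent_switch G S, rfl⟩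
  obtain ⟨e, he'⟩ : (switch G S).edgeSet.Nonempty :=
    Set.nonempty_of_ncard_ne_zero (by omega)
  induction e using Sym2.ind with
  | _ a b => exact le_oneEdgeRoot_of_adj he' hw hw0 he

end Spectrum

theorem statement9 (m s : ℕ) (hm : 3 ≤ m) (hs : 1 ≤ s)
    (G0 G1 Gs : SimpleGraph (Fin m))
    (h0 : MinSwitchEdges G0 0) (h1 : MinSwitchEdges G1 1) (hGs : MinSwitchEdges Gs s)
    (l0 l1 ls : ℝ)
    (hl0 : IsMaxEigenvalue (seidel G0) l0)
    (hl1 : IsMaxEigenvalue (seidel G1) l1)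
    (hls : IsMaxEigenvalue (seidel Gs) ls) :
    l0 = (m : ℝ) - 1 ∧
    l1 = (m : ℝ) / 2 - 2 + Real.sqrt ((m : ℝ) ^ 2 / 4 + (m : ℝ) - 3) ∧
    l1 ≤ l0 ∧ ls ≤ l1 := by
  obtain ⟨H0, hGH0, hH0⟩ := h0.1
  rw [Set.ncard_eq_zero, SimpleGraph.edgeSet_eq_empty] at hH0
  subst hH0
  have hl0' : l0 = m - 1 :=
    (hGH0.isMaxEigenvalue hl0).unique (isMaxEigenvalue_seidel_bot (by omega))
  obtain ⟨H1, hGH1, hH1⟩ := h1.1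
  obtain ⟨e, he⟩ := Set.ncard_eq_one.mp hH1
  induction e using Sym2.ind with | _ a b => ?_
  have hroot := isEigenvalue_seidel_of_edgeSet_eq_singleton he (by simpa using hm)
  have hl1' : l1 = oneEdgeRoot m := by
    rw [Fintype.card_fin] at hroot
    refine le_antisymm ?_ ((hGH1.isMaxEigenvalue hl1).2 _ hroot)
    simpa using h1.le_oneEdgeRoot le_rfl hl1.1
  refine ⟨hl0', hl1', ?_, ?_⟩
  · rw [hl0', hl1']
    exact oneEdgeRoot_le m.cast_nonneg
  · rw [hl1']
    simpa using hGs.le_oneEdgeRoot hs hls.1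

end FramesErasures
end
end
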